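/- arXiv:1307.5537 — 4 statements merged into one kernel-verified Lean document; each statement's English description precedes it below -/
import Mathlib

section
/- Let H be a harmonic function on ℝ² (i.e. ΔH = 0 everywhere) such that ∂H/∂x₂ ≥ 0 everywhere on ℝ². Then H is an affine function: there exist constants a, b, c ∈ ℝ such that H(x₁, x₂) = a x₁ + b x₂ + c for all (x₁, x₂) ∈ ℝ². -/
/-!
Transport `H` to a harmonic function `h` on `ℂ`. Harmonicity of `h` is exactly the Cauchy–Riemann
system for `F = ∂₁h - i ∂₂h`, so `F` is entire, and `Im F = -∂₂h ≤ 0`. An entire function with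
values in a closed half-plane is constant (apply Liouville to `exp (-i F)`, of modulus
`exp (Im F)`), so the gradient of `h` is constant and `h` is affine.
-/

/-- The Laplacian of `f : ℝ² → ℝ`, as the sum of the second partial derivatives. -/
noncomputable def lapl (f : EuclideanSpace ℝ (Fin 2) → ℝ) (x : EuclideanSpace ℝ (Fin 2)) : ℝ :=
  ∑ i, fderiv ℝ (fun y => fderiv ℝ f y (EuclideanSpace.single i 1)) x (EuclideanSpace.single i 1)

open Complex InnerProductSpace Laplacian Set Bornology

theorem Differentiable.apply_eq_apply_of_im_nonpos {f : ℂ → ℂ} (hf : Differentiable ℂ f)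
    (him : ∀ z, (f z).im ≤ 0) (z w : ℂ) : f z = f w := by
  set g := fun z ↦ Complex.exp (-(I * f z))
  have hg : Differentiable ℂ g := ((differentiable_const I).mul hf).neg.cexp
  have hg_bdd : IsBounded (range g) := isBounded_iff_forall_norm_le.2
    ⟨1, by rintro _ ⟨z, rfl⟩; simpa [g, norm_exp] using him z⟩
  refine is_const_of_deriv_eq_zero hf (fun z ↦ ?_) z w
  have hg_deriv := ((hf z).hasDerivAt.const_mul I).neg.cexp
  have hg_deriv_zero : HasDerivAt g 0 z := by
    rw [show g = fun _ ↦ g z from funext fun w ↦ hg.apply_eq_apply_of_bounded hg_bdd w z]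
    exact hasDerivAt_const z _
  simpa only [mul_eq_zero, Complex.exp_ne_zero, neg_eq_zero, I_ne_zero, false_or] using
    hg_deriv.unique hg_deriv_zero

section

variable {E G F : Type*} [NormedAddCommGroup E] [InnerProductSpace ℝ E] [FiniteDimensional ℝ E]
  [NormedAddCommGroup G] [InnerProductSpace ℝ G] [FiniteDimensional ℝ G]
  [NormedAddCommGroup F] [NormedSpace ℝ F]

theorem InnerProductSpace.laplacian_comp_linearIsometryEquiv (f : E → F) (L : G ≃ₗᵢ[ℝ] E)
    (x : G) : Δ (f ∘ L) x = Δ f (L x) := by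
  let b := stdOrthonormalBasis ℝ G
  rw [laplacian_eq_iteratedFDeriv_orthonormalBasis _ b,
    laplacian_eq_iteratedFDeriv_orthonormalBasis _ (b.map L)]
  have h := L.toContinuousLinearEquiv.iteratedFDerivWithin_comp_right f uniqueDiffOn_univ
    (mem_univ (L x)) 2
  rw [preimage_univ, iteratedFDerivWithin_univ, iteratedFDerivWithin_univ] at h
  refine Finset.sum_congr rfl fun i _ ↦ (DFunLike.congr_fun h ![b i, b i]).trans ?_
  simp only [ContinuousMultilinearMap.compContinuousLinearMap_apply, b.map_apply]
  congr 1 with j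
  fin_cases j <;> rfl

theorem InnerProductSpace.HarmonicAt.comp_linearIsometryEquiv {f : E → F} (L : G ≃ₗᵢ[ℝ] E)
    {x : G} (hf : HarmonicAt f (L x)) : HarmonicAt (f ∘ L) x := by
  refine ⟨hf.1.comp_continuousLinearMap (L.toContinuousLinearEquiv : G →L[ℝ] E), ?_⟩
  filter_upwards [L.continuous.continuousAt.eventually hf.2] with y hy
  simpa [laplacian_comp_linearIsometryEquiv] using hy

end

theorem lapl_eq_laplacian {f : EuclideanSpace ℝ (Fin 2) → ℝ} (hf : ContDiff ℝ 2 f) :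
    lapl f = Δ f := by
  ext x
  rw [laplacian_eq_iteratedFDeriv_orthonormalBasis f (EuclideanSpace.basisFun (Fin 2) ℝ), lapl]
  congr 1 with i
  have hdf : Differentiable ℝ (fderiv ℝ f) :=
    (hf.fderiv_right (m := 1) le_rfl).differentiable one_ne_zero
  rw [iteratedFDeriv_two_apply, fderiv_clm_apply (hdf x) (differentiableAt_const _)]
  simp

theorem Complex.real_continuousLinearMap_apply {F : Type*} [AddCommGroup F] [Module ℝ F]
    [TopologicalSpace F] (L : ℂ →L[ℝ] F) (z : ℂ) : L z = z.re • L 1 + z.im • L I := by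
  conv_lhs => rw [← re_add_im z, ← mul_one (z.re : ℂ), ← real_smul, ← real_smul]
  rw [map_add, map_smul, map_smul]

theorem InnerProductSpace.HarmonicOnNhd.fderiv_eq_of_forall_nonneg_fderiv_I {h : ℂ → ℝ}
    (hh : HarmonicOnNhd h univ) (hI : ∀ z, 0 ≤ fderiv ℝ h z I) (z w : ℂ) :
    fderiv ℝ h z = fderiv ℝ h w := by
  set F := fun z ↦ (fderiv ℝ h z 1 : ℂ) - I * fderiv ℝ h z I
  have hF : Differentiable ℂ F := fun z ↦
    HarmonicAt.differentiableAt_complex_partial (hh z (mem_univ z))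
  have hFzw := hF.apply_eq_apply_of_im_nonpos (fun z ↦ by simpa [F] using hI z) z w
  have h₁ : fderiv ℝ h z 1 = fderiv ℝ h w 1 := by simpa [F] using congrArg re hFzw
  have h₂ : fderiv ℝ h z I = fderiv ℝ h w I := by simpa [F] using congrArg im hFzw
  ext v
  rw [real_continuousLinearMap_apply _ v, real_continuousLinearMap_apply (fderiv ℝ h w) v, h₁,
    h₂]

theorem Complex.exists_eq_re_im_of_fderiv_eq {h : ℂ → ℝ} (hh : Differentiable ℝ h)
    (hconst : ∀ z w, fderiv ℝ h z = fderiv ℝ h w) :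
    ∃ a b c : ℝ, ∀ z, h z = a * z.re + b * z.im + c := by
  set L := fderiv ℝ h 0
  have hL : h = fun z ↦ L z + h 0 :=
    eq_of_fderiv_eq hh (L.differentiable.add_const _) (fun z ↦ by simp [L, hconst z 0]) 0
      (by simp)
  refine ⟨L 1, L I, h 0, fun z ↦ ?_⟩
  rw [congrFun hL z, real_continuousLinearMap_apply L z, smul_eq_mul, smul_eq_mul]
  ring

/-- A harmonic function on `ℝ²` with `∂H/∂x₂ ≥ 0` everywhere is affine:
`H(x₁, x₂) = a x₁ + b x₂ + c`. -/
theorem harmonic_monotone_affine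
    (H : EuclideanSpace ℝ (Fin 2) → ℝ)
    (hH : ContDiff ℝ 2 H) (hharm : ∀ x, lapl H x = 0)
    (hmon : ∀ x, 0 ≤ fderiv ℝ H x (EuclideanSpace.single 1 1)) :
    ∃ a b c : ℝ, ∀ x : EuclideanSpace ℝ (Fin 2), H x = a * x 0 + b * x 1 + c := by
  set ψ := Complex.orthonormalBasisOneI.repr
  have hψI : ψ I = EuclideanSpace.single 1 1 := by ext i; fin_cases i <;> simp [ψ]
  have hH_harm : HarmonicOnNhd (H ∘ ψ) univ := fun z _ ↦
    HarmonicAt.comp_linearIsometryEquiv ψ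
      ⟨hH.contDiffAt, .of_forall fun x ↦ by simpa [← lapl_eq_laplacian hH] using hharm x⟩
  have hI : ∀ z, 0 ≤ fderiv ℝ (H ∘ ψ) z I := fun z ↦ by
    rw [show H ∘ ψ = H ∘ ψ.toContinuousLinearEquiv from rfl,
      ContinuousLinearEquiv.comp_right_fderiv]
    simpa [hψI] using hmon (ψ z)
  obtain ⟨a, b, c, habc⟩ := Complex.exists_eq_re_im_of_fderiv_eq
    ((hH.differentiable two_ne_zero).comp ψ.differentiable)
    (hH_harm.fderiv_eq_of_forall_nonneg_fderiv_I hI)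
  refine ⟨a, b, c, fun x ↦ ?_⟩
  have := habc (ψ.symm x)
  rw [Function.comp_apply, ψ.apply_symm_apply] at this
  simpa [ψ] using this
end

section
/- The function H : ℝ² → ℝ defined by H(x, y) = e^y sin(x) is harmonic on ℝ² (ΔH = 0 everywhere), is not an affine function, and its positive part H⁺ is nondecreasing with respect to y, i.e. for every x ∈ ℝ and every s ≤ t one has H⁺(x, s) ≤ H⁺(x, t). -/
/-- The Laplacian of `f : ℝ × ℝ → ℝ`, as the sum of the second partial derivatives. -/
noncomputable def lap2 (f : ℝ × ℝ → ℝ) (z : ℝ × ℝ) : ℝ :=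
  fderiv ℝ (fun w => fderiv ℝ f w (1, 0)) z (1, 0) +
    fderiv ℝ (fun w => fderiv ℝ f w (0, 1)) z (0, 1)

/-!
For a product `H(x, y) = h(y) g(x)` the Laplacian separates as `h g'' + h'' g`, and
`exp'' = exp`, `sin'' = -sin` make it vanish. Restricting to `y = 0` shows `H` is not affine,
since `sin` vanishes at `0` and `π` but not at `π / 2`. Finally `H⁺ = e^y (sin x)⁺`, which is
nondecreasing in `y`.
-/

open ContinuousLinearMap

section SeparatedVariables

variable {g h : ℝ → ℝ}

lemma hasFDerivAt_mul_comp_snd_fst {g' h' : ℝ} {w : ℝ × ℝ}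
    (hg : HasDerivAt g g' w.1) (hh : HasDerivAt h h' w.2) :
    HasFDerivAt (fun p : ℝ × ℝ => h p.2 * g p.1)
      ((h w.2 * g') • fst ℝ ℝ ℝ + (h' * g w.1) • snd ℝ ℝ ℝ) w := by
  refine ((hh.comp_hasFDerivAt w hasFDerivAt_snd).mul
    (hg.comp_hasFDerivAt w hasFDerivAt_fst)).congr_fderiv ?_
  ext <;> simp [mul_comm]

lemma fderiv_mul_comp_snd_fst_apply_fst (hg : Differentiable ℝ g) (hh : Differentiable ℝ h) :
    (fun w => fderiv ℝ (fun p : ℝ × ℝ => h p.2 * g p.1) w (1, 0)) =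
      fun w => h w.2 * deriv g w.1 := by
  funext w
  simp [(hasFDerivAt_mul_comp_snd_fst (hg w.1).hasDerivAt (hh w.2).hasDerivAt).fderiv]

lemma fderiv_mul_comp_snd_fst_apply_snd (hg : Differentiable ℝ g) (hh : Differentiable ℝ h) :
    (fun w => fderiv ℝ (fun p : ℝ × ℝ => h p.2 * g p.1) w (0, 1)) =
      fun w => deriv h w.2 * g w.1 := by
  funext w
  simp [(hasFDerivAt_mul_comp_snd_fst (hg w.1).hasDerivAt (hh w.2).hasDerivAt).fderiv]

lemma lap2_mul_comp_snd_fst (hg : Differentiable ℝ g) (hg' : Differentiable ℝ (deriv g))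
    (hh : Differentiable ℝ h) (hh' : Differentiable ℝ (deriv h)) (z : ℝ × ℝ) :
    lap2 (fun p => h p.2 * g p.1) z =
      h z.2 * deriv (deriv g) z.1 + deriv (deriv h) z.2 * g z.1 := by
  rw [lap2, fderiv_mul_comp_snd_fst_apply_fst hg hh, fderiv_mul_comp_snd_fst_apply_snd hg hh,
    (hasFDerivAt_mul_comp_snd_fst (hg' z.1).hasDerivAt (hh z.2).hasDerivAt).fderiv,
    (hasFDerivAt_mul_comp_snd_fst (hg z.1).hasDerivAt (hh' z.2).hasDerivAt).fderiv]
  simp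

end SeparatedVariables

lemma lap2_exp_mul_sin (z : ℝ × ℝ) : lap2 (fun w => Real.exp w.2 * Real.sin w.1) z = 0 := by
  rw [lap2_mul_comp_snd_fst Real.differentiable_sin (by simp [Real.differentiable_cos])
    Real.differentiable_exp (by simp [Real.differentiable_exp])]
  simp [Real.deriv_cos']

lemma Real.not_exists_sin_eq_affine : ¬ ∃ a c : ℝ, ∀ x, Real.sin x = a * x + c := by
  rintro ⟨a, c, h⟩
  have h0 := h 0
  have hπ := h Real.pi
  have hπ2 := h (Real.pi / 2)
  simp only [Real.sin_zero, Real.sin_pi, Real.sin_pi_div_two, mul_zero, zero_add] at h0 hπ hπ2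
  have ha : a = 0 := by
    rw [← h0, add_zero, eq_comm, mul_eq_zero] at hπ
    exact hπ.resolve_right Real.pi_ne_zero
  simp [ha, ← h0] at hπ2

lemma max_mul_zero_le_max_mul_zero {a b : ℝ} (c : ℝ) (ha : 0 ≤ a) (hab : a ≤ b) :
    max (a * c) 0 ≤ max (b * c) 0 := by
  have hb : 0 ≤ b := ha.trans hab
  calc max (a * c) 0 = a * max c 0 := by rw [mul_max_of_nonneg _ _ ha, mul_zero]
    _ ≤ b * max c 0 := mul_le_mul_of_nonneg_right hab (le_max_right _ _)
    _ = max (b * c) 0 := by rw [mul_max_of_nonneg _ _ hb, mul_zero]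

/-- **Remark 3.4.** The function `H(x, y) = e^y sin x` is harmonic on `ℝ²`, is not
affine, and its positive part `H⁺` is nondecreasing with respect to `y`. -/
theorem exp_sin_harmonic_not_affine_positive_part_monotone :
    (∀ z : ℝ × ℝ, lap2 (fun w => Real.exp w.2 * Real.sin w.1) z = 0) ∧
    (¬ ∃ a b c : ℝ, ∀ z : ℝ × ℝ, Real.exp z.2 * Real.sin z.1 = a * z.1 + b * z.2 + c) ∧
    (∀ (x s t : ℝ), s ≤ t →
      max (Real.exp s * Real.sin x) 0 ≤ max (Real.exp t * Real.sin x) 0) := by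
  refine ⟨lap2_exp_mul_sin, ?_, fun x s t hst =>
    max_mul_zero_le_max_mul_zero _ (Real.exp_pos s).le (Real.exp_le_exp.2 hst)⟩
  rintro ⟨a, b, c, h⟩
  exact Real.not_exists_sin_eq_affine ⟨a, c, fun x => by simpa using h (x, 0)⟩
end

section
/- Let u, v be C² functions on ℝ² with u > 0 and v > 0 everywhere, satisfying Δv = v u² on ℝ² and the linear growth bound v(x) ≤ C₀(1 + |x|) for all x ∈ ℝ² (for some constant C₀ > 0). Then there exists a constant C > 0 such that ∫_{B_r(0)} |∇v|² dx ≤ C r² for all r > 0. -/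
/-!
Since `v Δv = v² u² ≥ 0`, testing this against `χ² v`, for a cutoff `χ` equal to `1` on `B_r`,
supported in `B_{2r}` and with `|∇χ| ≲ 1/r`, gives Caccioppoli's inequality
`∫_{B_r} |∇v|² ≤ 4 ∫ v² |∇χ|² ≲ r⁻² · sup_{B_{2r}} v² · r² ≲ (1 + r)²` by the growth bound.
This is `≲ r²` for `r ≥ 1`; for `r ≤ 1` the continuity of `∇v` gives `∫_{B_r} |∇v|² ≲ r²`.
-/

open MeasureTheory Metric

open Set Module

theorem HasCompactSupport.integrable_mul {X : Type*} [TopologicalSpace X] [MeasurableSpace X]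
    [OpensMeasurableSpace X] {μ : Measure X} [IsFiniteMeasureOnCompacts μ] {f g : X → ℝ}
    (hfs : HasCompactSupport f) (hf : Continuous f) (hg : Continuous g) :
    Integrable (fun x => f x * g x) μ :=
  (hf.mul hg).integrable_of_hasCompactSupport hfs.mul_right

theorem setIntegral_le_mul_measureReal {X : Type*} [MeasurableSpace X] {μ : Measure X}
    {s : Set X} {f : X → ℝ} {K : ℝ} (hs : μ s < ⊤) (hK : ∀ x ∈ s, ‖f x‖ ≤ K) :
    ∫ x in s, f x ∂μ ≤ K * μ.real s :=
  (Real.le_norm_self _).trans (norm_setIntegral_le_of_norm_le_const hs hK)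

theorem exists_setIntegral_ball_le_mul_pow {E : Type*} [NormedAddCommGroup E] [NormedSpace ℝ E]
    [FiniteDimensional ℝ E] [MeasurableSpace E] [BorelSpace E] (μ : Measure E)
    [μ.IsAddHaarMeasure] {f : E → ℝ} (hf : Continuous f) :
    ∃ C, ∀ r ∈ Ioc (0 : ℝ) 1, ∫ x in ball 0 r, f x ∂μ ≤ C * r ^ finrank ℝ E := by
  obtain ⟨S, hS⟩ := (isCompact_closedBall (0 : E) 1).exists_bound_of_continuousOn hf.continuousOn
  have hS0 : 0 ≤ S := (norm_nonneg _).trans (hS 0 (mem_closedBall_self zero_le_one))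
  refine ⟨S * μ.real (ball 0 1), fun r ⟨hr0, hr1⟩ => ?_⟩
  calc ∫ x in ball 0 r, f x ∂μ ≤ S * μ.real (ball 0 r) :=
        setIntegral_le_mul_measureReal measure_ball_lt_top
          fun x hx => hS x (ball_subset_closedBall (ball_subset_ball hr1 hx))
    _ ≤ S * μ.real (closedBall 0 r) :=
        mul_le_mul_of_nonneg_left
          (measureReal_mono ball_subset_closedBall measure_closedBall_lt_top.ne) hS0
    _ = S * μ.real (ball 0 1) * r ^ finrank ℝ E := by
        rw [Measure.addHaar_real_closedBall μ 0 hr0.le]; ring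

theorem exists_cutoff_norm_fderiv_le {E : Type*} [NormedAddCommGroup E] [NormedSpace ℝ E]
    [FiniteDimensional ℝ E] [HasContDiffBump E] :
    ∃ M, ∀ r > (0 : ℝ), ∃ χ : E → ℝ, ContDiff ℝ 1 χ ∧ tsupport χ ⊆ closedBall 0 (2 * r) ∧
      EqOn χ 1 (ball 0 r) ∧ ∀ x, ‖fderiv ℝ χ x‖ ≤ M / r := by
  let β : ContDiffBump (0 : E) := ⟨1, 2, one_pos, one_lt_two⟩
  obtain ⟨M, hM⟩ := (β.contDiff.continuous_fderiv one_ne_zero).bounded_above_of_compact_support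
    (β.hasCompactSupport.fderiv (𝕜 := ℝ))
  refine ⟨M, fun r hr =>
    ⟨fun x => β (r⁻¹ • x), β.contDiff.comp (contDiff_id.const_smul r⁻¹), ?_, ?_, ?_⟩⟩
  · refine closure_minimal (fun x hx => ?_) isClosed_closedBall
    have := β.support_eq ▸ (show r⁻¹ • x ∈ Function.support β from hx)
    rw [mem_ball_zero_iff, norm_smul, Real.norm_of_nonneg (inv_nonneg.2 hr.le),
      inv_mul_lt_iff₀ hr] at this
    exact mem_closedBall_zero_iff.2 (this.le.trans_eq (mul_comm _ _))
  · intro x hx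
    refine β.one_of_mem_closedBall (mem_closedBall_zero_iff.2 ?_)
    rw [norm_smul, Real.norm_of_nonneg (inv_nonneg.2 hr.le), inv_mul_le_iff₀ hr]
    exact (mem_ball_zero_iff.1 hx).le.trans_eq (mul_one r).symm
  · intro x
    rw [fderiv_comp_smul, norm_smul, Real.norm_of_nonneg (inv_nonneg.2 hr.le), div_eq_inv_mul]
    exact mul_le_mul_of_nonneg_left (hM _) (inv_nonneg.2 hr.le)

theorem continuous_norm_gradient_sq {F : Type*} [NormedAddCommGroup F] [InnerProductSpace ℝ F]
    [CompleteSpace F] {f : F → ℝ} (hf : ContDiff ℝ 1 f) :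
    Continuous fun x => ‖gradient f x‖ ^ 2 :=
  (((InnerProductSpace.toDual ℝ F).symm.continuous.comp
    (hf.continuous_fderiv one_ne_zero)).norm).pow 2

theorem hasCompactSupport_norm_gradient_sq {F : Type*} [NormedAddCommGroup F]
    [InnerProductSpace ℝ F] [CompleteSpace F] {f : F → ℝ} (hf : HasCompactSupport f) :
    HasCompactSupport fun x => ‖gradient f x‖ ^ 2 :=
  (hf.fderiv (𝕜 := ℝ)).comp_left (g := fun L => ‖(InnerProductSpace.toDual ℝ _).symm L‖ ^ 2)
    (by simp)

theorem integrable_sq_mul_norm_gradient_sq {F : Type*} [NormedAddCommGroup F]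
    [InnerProductSpace ℝ F] [CompleteSpace F] [MeasurableSpace F] [OpensMeasurableSpace F]
    {μ : Measure F} [IsFiniteMeasureOnCompacts μ] {v χ : F → ℝ} (hχ : Continuous χ)
    (hχs : HasCompactSupport χ) (hv : ContDiff ℝ 1 v) :
    Integrable (fun x => χ x ^ 2 * ‖gradient v x‖ ^ 2) μ :=
  (hχs.comp_left (g := (· ^ 2)) (zero_pow two_ne_zero)).integrable_mul (hχ.pow 2)
    (continuous_norm_gradient_sq hv)

theorem integral_sq_mul_norm_gradient_sq_le_of_tsupport_subset {F : Type*}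
    [NormedAddCommGroup F] [InnerProductSpace ℝ F] [CompleteSpace F] [MeasurableSpace F]
    {μ : Measure F} {s : Set F} {v χ : F → ℝ} {K L : ℝ} (hs : μ s < ⊤) (hχs : tsupport χ ⊆ s)
    (hK : ∀ x ∈ s, |v x| ≤ K) (hL : ∀ x, ‖fderiv ℝ χ x‖ ≤ L) :
    ∫ x, v x ^ 2 * ‖gradient χ x‖ ^ 2 ∂μ ≤ K ^ 2 * L ^ 2 * μ.real s := by
  rw [← setIntegral_eq_integral_of_forall_compl_eq_zero fun x hx => ?_]
  · refine setIntegral_le_mul_measureReal hs fun x hx => ?_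
    rw [Real.norm_of_nonneg (by positivity), gradient, LinearIsometryEquiv.norm_map]
    have hvK : v x ^ 2 ≤ K ^ 2 := sq_abs (v x) ▸ pow_le_pow_left₀ (abs_nonneg _) (hK x hx) 2
    have hχL : ‖fderiv ℝ χ x‖ ^ 2 ≤ L ^ 2 := pow_le_pow_left₀ (norm_nonneg _) (hL x) 2
    exact mul_le_mul hvK hχL (by positivity) ((sq_nonneg _).trans hvK)
  · rw [gradient, fderiv_of_notMem_tsupport ℝ fun h => hx (hχs h)]
    simp

section PartialDeriv

variable {ι : Type*} [Fintype ι] [DecidableEq ι]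

noncomputable def partialDeriv (i : ι) (f : EuclideanSpace ℝ ι → ℝ) (x : EuclideanSpace ℝ ι) : ℝ :=
  fderiv ℝ f x (EuclideanSpace.single i 1)

noncomputable def coordLaplacian (f : EuclideanSpace ℝ ι → ℝ) (x : EuclideanSpace ℝ ι) : ℝ :=
  ∑ i, partialDeriv i (partialDeriv i f) x

variable {f g : EuclideanSpace ℝ ι → ℝ}

theorem gradient_apply_eq_partialDeriv (f : EuclideanSpace ℝ ι → ℝ) (x : EuclideanSpace ℝ ι)
    (i : ι) : gradient f x i = partialDeriv i f x := by
  rw [partialDeriv, ← InnerProductSpace.toDual_symm_apply (𝕜 := ℝ), ← gradient,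
    EuclideanSpace.inner_single_right]
  simp

theorem norm_gradient_sq_eq_sum (f : EuclideanSpace ℝ ι → ℝ) (x : EuclideanSpace ℝ ι) :
    ‖gradient f x‖ ^ 2 = ∑ i, partialDeriv i f x ^ 2 := by
  simp only [EuclideanSpace.real_norm_sq_eq, gradient_apply_eq_partialDeriv]

theorem contDiff_partialDeriv {n : WithTop ℕ∞} (hf : ContDiff ℝ (n + 1) f) (i : ι) :
    ContDiff ℝ n (partialDeriv i f) :=
  (hf.fderiv_right le_rfl).clm_apply contDiff_const

theorem continuous_partialDeriv (hf : ContDiff ℝ 1 f) (i : ι) : Continuous (partialDeriv i f) :=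
  (hf.continuous_fderiv one_ne_zero).clm_apply continuous_const

theorem partialDeriv_mul {x : EuclideanSpace ℝ ι} (hf : DifferentiableAt ℝ f x)
    (hg : DifferentiableAt ℝ g x) (i : ι) :
    partialDeriv i (fun y => f y * g y) x =
      partialDeriv i f x * g x + f x * partialDeriv i g x := by
  simp only [partialDeriv, fderiv_fun_mul hf hg, add_apply, smul_apply, smul_eq_mul]
  ring

theorem integrable_partialDeriv_mul (hf : ContDiff ℝ 1 f) (hfs : HasCompactSupport f)
    (hg : Continuous g) (i : ι) : Integrable fun x => partialDeriv i f x * g x :=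
  (hfs.fderiv_apply (𝕜 := ℝ) _).integrable_mul (continuous_partialDeriv hf i) hg

theorem integral_mul_partialDeriv_eq_neg (hf : ContDiff ℝ 1 f) (hfs : HasCompactSupport f)
    (hg : ContDiff ℝ 1 g) (i : ι) :
    ∫ x, f x * partialDeriv i g x = -∫ x, partialDeriv i f x * g x :=
  integral_mul_fderiv_eq_neg_fderiv_mul_of_integrable
    (integrable_partialDeriv_mul hf hfs hg.continuous i)
    (hfs.integrable_mul hf.continuous (continuous_partialDeriv hg i))
    (hfs.integrable_mul hf.continuous hg.continuous)
    (fun x _ => hf.differentiable one_ne_zero x) (fun x _ => hg.differentiable one_ne_zero x)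

theorem integral_mul_coordLaplacian_eq_neg (hf : ContDiff ℝ 1 f) (hfs : HasCompactSupport f)
    (hg : ContDiff ℝ 2 g) :
    ∫ x, f x * coordLaplacian g x = -∫ x, ∑ i, partialDeriv i f x * partialDeriv i g x := by
  have hg' (i : ι) : ContDiff ℝ 1 (partialDeriv i g) := contDiff_partialDeriv hg i
  simp only [coordLaplacian, Finset.mul_sum]
  rw [integral_finsetSum, integral_finsetSum, ← Finset.sum_neg_distrib]
  · exact Finset.sum_congr rfl fun i _ => integral_mul_partialDeriv_eq_neg hf hfs (hg' i) i
  · exact fun i _ => integrable_partialDeriv_mul hf hfs (hg' i).continuous i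
  · exact fun i _ => hfs.integrable_mul hf.continuous (continuous_partialDeriv (hg' i) i)

/-- Caccioppoli's inequality: test `v Δv ≥ 0` against `χ² v` and absorb the cross term
`2 χ v ∇χ·∇v` by AM-GM. -/
theorem integral_sq_mul_norm_gradient_sq_le {v χ : EuclideanSpace ℝ ι → ℝ} (hv : ContDiff ℝ 2 v)
    (hsub : ∀ x, 0 ≤ v x * coordLaplacian v x)
    (hχ : ContDiff ℝ 1 χ) (hχs : HasCompactSupport χ) :
    ∫ x, χ x ^ 2 * ‖gradient v x‖ ^ 2 ≤ 4 * ∫ x, v x ^ 2 * ‖gradient χ x‖ ^ 2 := by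
  have hv1 : ContDiff ℝ 1 v := hv.of_le one_le_two
  set φ := fun x => χ x * (χ x * v x)
  have hφ : ContDiff ℝ 1 φ := hχ.mul (hχ.mul hv1)
  have hφs : HasCompactSupport φ := hχs.mul_right
  have hP := integrable_sq_mul_norm_gradient_sq (μ := volume) hχ.continuous hχs hv1
  have hW : Integrable fun x => v x ^ 2 * ‖gradient χ x‖ ^ 2 := by
    simpa only [mul_comm] using (hasCompactSupport_norm_gradient_sq hχs).integrable_mul
      (μ := volume) (continuous_norm_gradient_sq hχ) (g := fun x => v x ^ 2) (hv1.continuous.pow 2)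
  have hpointwise (x) :
      1 / 2 * (χ x ^ 2 * ‖gradient v x‖ ^ 2) - 2 * (v x ^ 2 * ‖gradient χ x‖ ^ 2)
        ≤ ∑ i, partialDeriv i φ x * partialDeriv i v x := by
    have hχx := hχ.differentiable one_ne_zero x
    have hvx := hv1.differentiable one_ne_zero x
    simp only [norm_gradient_sq_eq_sum, Finset.mul_sum, ← Finset.sum_sub_distrib]
    refine Finset.sum_le_sum fun i _ => ?_
    rw [partialDeriv_mul (g := fun y => χ y * v y) hχx (hχx.mul hvx), partialDeriv_mul hχx hvx]
    nlinarith [sq_nonneg (χ x * partialDeriv i v x + 2 * v x * partialDeriv i χ x)]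
  have hnonpos : ∫ x, ∑ i, partialDeriv i φ x * partialDeriv i v x ≤ 0 := by
    rw [← neg_nonneg, ← integral_mul_coordLaplacian_eq_neg hφ hφs hv]
    exact integral_nonneg fun x => by
      simpa only [Pi.zero_apply, φ, pow_two, mul_assoc] using
        mul_nonneg (sq_nonneg (χ x)) (hsub x)
  have hlower := (integral_mono ((hP.const_mul (1 / 2)).sub' (hW.const_mul 2))
    (integrable_finsetSum _ fun i _ =>
      integrable_partialDeriv_mul hφ hφs (continuous_partialDeriv hv1 i) i) hpointwise).trans
    hnonpos
  rw [integral_sub (hP.const_mul _) (hW.const_mul _), integral_const_mul,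
    integral_const_mul] at hlower
  linarith

theorem exists_sq_mul_setIntegral_ball_norm_gradient_sq_le :
    ∃ A ≥ (0 : ℝ), ∀ v : EuclideanSpace ℝ ι → ℝ, ContDiff ℝ 2 v →
      (∀ x, 0 ≤ v x * coordLaplacian v x) →
      ∀ r > (0 : ℝ), ∀ K, (∀ x ∈ closedBall 0 (2 * r), |v x| ≤ K) →
        r ^ 2 * ∫ x in ball 0 r, ‖gradient v x‖ ^ 2 ≤ A * K ^ 2 * r ^ Fintype.card ι := by
  obtain ⟨M, hM⟩ := exists_cutoff_norm_fderiv_le (E := EuclideanSpace ℝ ι)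
  set B := volume.real (ball (0 : EuclideanSpace ℝ ι) 1)
  refine ⟨4 * M ^ 2 * 2 ^ Fintype.card ι * B, by positivity, fun v hv hsub r hr K hK => ?_⟩
  obtain ⟨χ, hχ, hχsupp, hχ1, hχ'⟩ := hM r hr
  have hχs : HasCompactSupport χ :=
    (isCompact_closedBall _ _).of_isClosed_subset (isClosed_tsupport _) hχsupp
  have hinner : ∫ x in ball 0 r, ‖gradient v x‖ ^ 2 ≤ ∫ x, χ x ^ 2 * ‖gradient v x‖ ^ 2 :=
    calc ∫ x in ball 0 r, ‖gradient v x‖ ^ 2 = ∫ x in ball 0 r, χ x ^ 2 * ‖gradient v x‖ ^ 2 :=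
          setIntegral_congr_fun measurableSet_ball fun x hx => by simp [hχ1 hx]
      _ ≤ ∫ x, χ x ^ 2 * ‖gradient v x‖ ^ 2 :=
          setIntegral_le_integral (integrable_sq_mul_norm_gradient_sq hχ.continuous hχs
            (hv.of_le one_le_two)) (.of_forall fun x => by positivity)
  have hcutoff := integral_sq_mul_norm_gradient_sq_le_of_tsupport_subset (μ := volume)
    measure_closedBall_lt_top hχsupp hK hχ'
  have hcac := integral_sq_mul_norm_gradient_sq_le hv hsub hχ hχs
  rw [Measure.addHaar_real_closedBall _ _ (by positivity), finrank_euclideanSpace] at hcutoff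
  calc r ^ 2 * ∫ x in ball 0 r, ‖gradient v x‖ ^ 2
      ≤ r ^ 2 * (4 * (K ^ 2 * (M / r) ^ 2 * ((2 * r) ^ Fintype.card ι * B))) := by gcongr; linarith
    _ = _ := by field_simp; ring

end PartialDeriv

theorem gradient_square_quadratic_bound_general
    (u v : EuclideanSpace ℝ (Fin 2) → ℝ)
    (hv : ContDiff ℝ 2 v)
    (hvpos : ∀ x, 0 < v x)
    (heqv : ∀ x, lapl v x = v x * (u x) ^ 2)
    (C₀ : ℝ) (hC₀ : 0 < C₀)
    (hgrowth : ∀ x, v x ≤ C₀ * (1 + ‖x‖)) :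
    ∃ C > (0 : ℝ), ∀ r > (0 : ℝ),
      ∫ x in ball (0 : EuclideanSpace ℝ (Fin 2)) r, ‖gradient v x‖ ^ 2 ≤ C * r ^ 2 := by
  have hsub (x) : 0 ≤ v x * coordLaplacian v x := by
    rw [show coordLaplacian v x = lapl v x from rfl, heqv]
    exact mul_nonneg (hvpos x).le (mul_nonneg (hvpos x).le (sq_nonneg _))
  obtain ⟨C₁, hsmall⟩ :=
    exists_setIntegral_ball_le_mul_pow volume (continuous_norm_gradient_sq (hv.of_le one_le_two))
  obtain ⟨A, hA, hlarge⟩ := exists_sq_mul_setIntegral_ball_norm_gradient_sq_le (ι := Fin 2)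
  refine ⟨max C₁ (9 * C₀ ^ 2 * A) + 1, by positivity, fun r hr => ?_⟩
  rcases le_or_gt r 1 with hr1 | hr1
  · have h := hsmall r ⟨hr, hr1⟩
    rw [finrank_euclideanSpace_fin] at h
    exact h.trans (by gcongr; linarith [le_max_left C₁ (9 * C₀ ^ 2 * A)])
  · have hK (x) (hx : x ∈ closedBall 0 (2 * r)) : |v x| ≤ 3 * C₀ * r := by
      rw [abs_of_pos (hvpos x)]
      nlinarith [hgrowth x, mem_closedBall_zero_iff.1 hx]
    have h := hlarge v hv hsub r hr _ hK
    rw [Fintype.card_fin] at h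
    have h' : ∫ x in ball 0 r, ‖gradient v x‖ ^ 2 ≤ 9 * C₀ ^ 2 * A * r ^ 2 :=
      le_of_mul_le_mul_left (h.trans_eq (by ring)) (by positivity)
    exact h'.trans (by gcongr; linarith [le_max_right C₁ (9 * C₀ ^ 2 * A)])

/-- If `u, v ∈ C²(ℝ²)` are positive, `Δv = v u²`, and `v` has linear growth
`v(x) ≤ C₀ (1 + |x|)`, then `∫_{B_r(0)} |∇v|² ≤ C r²` for all `r > 0`. -/
theorem gradient_square_quadratic_bound
    (u v : EuclideanSpace ℝ (Fin 2) → ℝ)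
    (hu : ContDiff ℝ 2 u) (hv : ContDiff ℝ 2 v)
    (hupos : ∀ x, 0 < u x) (hvpos : ∀ x, 0 < v x)
    (heqv : ∀ x, lapl v x = v x * (u x) ^ 2)
    (C₀ : ℝ) (hC₀ : 0 < C₀)
    (hgrowth : ∀ x, v x ≤ C₀ * (1 + ‖x‖)) :
    ∃ C > (0 : ℝ), ∀ r > (0 : ℝ),
      ∫ x in ball (0 : EuclideanSpace ℝ (Fin 2)) r, ‖gradient v x‖ ^ 2 ≤ C * r ^ 2 :=
  gradient_square_quadratic_bound_general u v hv hvpos heqv C₀ hC₀ hgrowth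
end

section
/- Let u, v be functions on ℝ² with v of class C³ and u of class C¹, v > 0 everywhere, satisfying Δv = v u² on ℝ² and ∂u/∂x₂ > 0 everywhere on ℝ². Set v₂ := ∂v/∂x₂ and σ := v₂/v. Then div(v² ∇σ) ≥ 0 everywhere on ℝ²; equivalently, Δv₂ − v₂ u² = div(v² ∇σ)/v ≥ 0 on ℝ², where u > 0 is additionally assumed so that Δv₂ = v₂ u² + 2 v u ∂u/∂x₂ > v₂ u². -/
/-!
Writing `σ = v₂ / v`, the quotient rule gives `v² ∂ᵢσ = v ∂ᵢv₂ − v₂ ∂ᵢv`, whose divergence is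
`v Δv₂ − v₂ Δv = v (Δv₂ − v₂ u²)`. Since `v ∈ C³`, partial derivatives commute with `Δ`, so
differentiating `Δv = v u²` in `x₂` gives `Δv₂ − v₂ u² = 2 v u ∂₂u`, which is positive.
-/

open Filter Topology

/-- The divergence of a vector field `F : ℝ² → ℝ²`, as the sum of the partial
derivatives of its components. -/
noncomputable def dvg (F : EuclideanSpace ℝ (Fin 2) → EuclideanSpace ℝ (Fin 2))
    (x : EuclideanSpace ℝ (Fin 2)) : ℝ :=
  ∑ i, fderiv ℝ (fun y => F y i) x (EuclideanSpace.single i 1)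

section

variable {E F : Type*} [NormedAddCommGroup E] [NormedSpace ℝ E] [NormedAddCommGroup F]
  [NormedSpace ℝ F]

theorem ContDiff.fderiv_apply_const {n m : WithTop ℕ∞} {f : E → F} (hf : ContDiff ℝ n f)
    (hmn : m + 1 ≤ n) (w : E) : ContDiff ℝ m (fun x => fderiv ℝ f x w) :=
  (hf.fderiv_right hmn).clm_apply contDiff_const

theorem fderiv_fderiv_apply_comm {f : E → F} (hf : ContDiff ℝ 2 f) (x w z : E) :
    fderiv ℝ (fun y => fderiv ℝ f y w) x z = fderiv ℝ (fun y => fderiv ℝ f y z) x w := by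
  have hdf : DifferentiableAt ℝ (fderiv ℝ f) x :=
    (hf.fderiv_right (m := 1) le_rfl).differentiable one_ne_zero x
  rw [fderiv_clm_apply hdf (differentiableAt_const w),
    fderiv_clm_apply hdf (differentiableAt_const z)]
  simpa using hf.contDiffAt.isSymmSndFDerivAt (by simp) z w

theorem sq_mul_fderiv_div_apply {f g : E → ℝ} {x : E} (hf : DifferentiableAt ℝ f x)
    (hg : DifferentiableAt ℝ g x) (hx : g x ≠ 0) (w : E) :
    g x ^ 2 * fderiv ℝ (fun y => f y / g y) x w = g x * fderiv ℝ f x w - f x * fderiv ℝ g x w := by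
  have hq : DifferentiableAt ℝ (fun y => f y / g y) x := by
    fun_prop (disch := exact hx)
  have hfg : (fun y => f y / g y * g y) =ᶠ[𝓝 x] f :=
    (hg.continuousAt.eventually_ne hx).mono fun y hy => div_mul_cancel₀ _ hy
  have h := congrArg (fun L : E →L[ℝ] ℝ => L w) hfg.fderiv_eq
  simp only [fderiv_fun_mul hq hg, add_apply, smul_apply, smul_eq_mul] at h
  rw [← h]
  field_simp
  ring

end

theorem gradient_apply_eq_fderiv_single {ι : Type*} [Fintype ι] [DecidableEq ι]
    (f : EuclideanSpace ℝ ι → ℝ) (x : EuclideanSpace ℝ ι) (i : ι) :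
    gradient f x i = fderiv ℝ f x (EuclideanSpace.single i 1) := by
  rw [← inner_gradient_left, EuclideanSpace.inner_single_right, one_mul, conj_trivial]

theorem dvg_sq_smul_gradient_div {v w : EuclideanSpace ℝ (Fin 2) → ℝ} (hv : ContDiff ℝ 2 v)
    (hw : ContDiff ℝ 2 w) (hv0 : ∀ y, v y ≠ 0) (x : EuclideanSpace ℝ (Fin 2)) :
    dvg (fun y => v y ^ 2 • gradient (fun z => w z / v z) y) x
      = v x * lapl w x - w x * lapl v x := by
  have hvd : Differentiable ℝ v := hv.differentiable two_ne_zero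
  have hwd : Differentiable ℝ w := hw.differentiable two_ne_zero
  have hterm : ∀ i : Fin 2,
      fderiv ℝ (fun y => (v y ^ 2 • gradient (fun z => w z / v z) y) i) x
          (EuclideanSpace.single i 1)
        = v x * fderiv ℝ (fun y => fderiv ℝ w y (EuclideanSpace.single i 1)) x
            (EuclideanSpace.single i 1)
          - w x * fderiv ℝ (fun y => fderiv ℝ v y (EuclideanSpace.single i 1)) x
            (EuclideanSpace.single i 1) := by
    intro i
    set e : EuclideanSpace ℝ (Fin 2) := EuclideanSpace.single i 1
    have hvi : Differentiable ℝ (fun y => fderiv ℝ v y e) :=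
      (hv.fderiv_apply_const le_rfl e).differentiable one_ne_zero
    have hwi : Differentiable ℝ (fun y => fderiv ℝ w y e) :=
      (hw.fderiv_apply_const le_rfl e).differentiable one_ne_zero
    have hcomp : (fun y => (v y ^ 2 • gradient (fun z => w z / v z) y) i)
        = fun y => v y * fderiv ℝ w y e - w y * fderiv ℝ v y e := by
      funext y
      rw [PiLp.smul_apply, smul_eq_mul, gradient_apply_eq_fderiv_single,
        sq_mul_fderiv_div_apply (hwd y) (hvd y) (hv0 y)]
    rw [hcomp, fderiv_fun_sub ((hvd x).fun_mul (hwi x)) ((hwd x).fun_mul (hvi x)),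
      fderiv_fun_mul (hvd x) (hwi x), fderiv_fun_mul (hwd x) (hvi x)]
    simp only [sub_apply, add_apply, smul_apply, smul_eq_mul]
    ring
  simp only [dvg, lapl, hterm, Finset.mul_sum, Finset.sum_sub_distrib]

theorem lapl_fderiv_apply {v : EuclideanSpace ℝ (Fin 2) → ℝ} (hv : ContDiff ℝ 3 v)
    (e x : EuclideanSpace ℝ (Fin 2)) :
    lapl (fun y => fderiv ℝ v y e) x = fderiv ℝ (lapl v) x e := by
  have hv2 : ContDiff ℝ 2 v := hv.of_le (by norm_num)
  have hvi : ∀ i : Fin 2, ContDiff ℝ 2 (fun y => fderiv ℝ v y (EuclideanSpace.single i 1)) :=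
    fun i => hv.fderiv_apply_const (by norm_num) _
  have hvii_diff : ∀ i : Fin 2, DifferentiableAt ℝ (fun y => fderiv ℝ
      (fun z => fderiv ℝ v z (EuclideanSpace.single i 1)) y (EuclideanSpace.single i 1)) x :=
    fun i => ((hvi i).fderiv_apply_const one_add_one_eq_two.le _).differentiable one_ne_zero x
  have hswap : ∀ i : Fin 2,
      (fun y => fderiv ℝ (fun z => fderiv ℝ v z e) y (EuclideanSpace.single i 1))
        = fun y => fderiv ℝ (fun z => fderiv ℝ v z (EuclideanSpace.single i 1)) y e :=
    fun i => funext fun y => fderiv_fderiv_apply_comm hv2 y e _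
  unfold lapl
  rw [fderiv_fun_sum fun i _ => hvii_diff i, sum_apply]
  refine Finset.sum_congr rfl fun i _ => ?_
  rw [hswap i]
  exact fderiv_fderiv_apply_comm (hvi i) x e _

theorem lapl_fderiv_apply_of_lapl_eq_mul_sq {u v : EuclideanSpace ℝ (Fin 2) → ℝ}
    (hv : ContDiff ℝ 3 v) (hlapl : ∀ y, lapl v y = v y * u y ^ 2)
    {x : EuclideanSpace ℝ (Fin 2)} (hu : DifferentiableAt ℝ u x) (e : EuclideanSpace ℝ (Fin 2)) :
    lapl (fun y => fderiv ℝ v y e) x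
      = fderiv ℝ v x e * u x ^ 2 + 2 * v x * u x * fderiv ℝ u x e := by
  have hvd : DifferentiableAt ℝ v x := hv.differentiable (by norm_num) x
  rw [lapl_fderiv_apply hv, funext hlapl, fderiv_fun_mul hvd (hu.fun_pow 2), fderiv_fun_pow 2 hu]
  simp only [add_apply, smul_apply, smul_eq_mul]
  ring

/-- Let `v ∈ C³(ℝ²)` and `u ∈ C¹(ℝ²)` with `u, v > 0`, `Δv = v u²` and `∂u/∂x₂ > 0`.
With `v₂ := ∂v/∂x₂` and `σ := v₂ / v` one has `div(v² ∇σ) ≥ 0` on `ℝ²`; equivalently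
`Δv₂ − v₂ u² = div(v² ∇σ)/v ≥ 0` on `ℝ²`. -/
theorem div_v_sq_grad_sigma_nonneg
    (u v : EuclideanSpace ℝ (Fin 2) → ℝ)
    (hv : ContDiff ℝ 3 v) (hu : ContDiff ℝ 1 u)
    (hvpos : ∀ x, 0 < v x) (hupos : ∀ x, 0 < u x)
    (heqv : ∀ x, lapl v x = v x * (u x) ^ 2)
    (hmonu : ∀ x, 0 < fderiv ℝ u x (EuclideanSpace.single 1 1)) :
    (∀ x, 0 ≤ dvg (fun y => (v y) ^ 2 •
        gradient (fun z => fderiv ℝ v z (EuclideanSpace.single 1 1) / v z) y) x) ∧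
    (∀ x, lapl (fun y => fderiv ℝ v y (EuclideanSpace.single 1 1)) x -
        fderiv ℝ v x (EuclideanSpace.single 1 1) * (u x) ^ 2 =
      dvg (fun y => (v y) ^ 2 •
        gradient (fun z => fderiv ℝ v z (EuclideanSpace.single 1 1) / v z) y) x / v x) := by
  set e₂ : EuclideanSpace ℝ (Fin 2) := EuclideanSpace.single 1 1
  have hdvg : ∀ x, dvg (fun y => v y ^ 2 • gradient (fun z => fderiv ℝ v z e₂ / v z) y) x
      = v x * (lapl (fun y => fderiv ℝ v y e₂) x - fderiv ℝ v x e₂ * u x ^ 2) := fun x => by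
    rw [dvg_sq_smul_gradient_div (hv.of_le (by norm_num)) (hv.fderiv_apply_const le_rfl e₂)
      (fun y => (hvpos y).ne'), heqv]
    ring
  have hlapl : ∀ x, lapl (fun y => fderiv ℝ v y e₂) x - fderiv ℝ v x e₂ * u x ^ 2
      = 2 * v x * u x * fderiv ℝ u x e₂ := fun x => by
    rw [lapl_fderiv_apply_of_lapl_eq_mul_sq hv heqv (hu.differentiable one_ne_zero x)]
    ring
  refine ⟨fun x => ?_, fun x => ?_⟩
  · rw [hdvg, hlapl]
    have hpos := mul_pos (mul_pos (mul_pos two_pos (hvpos x)) (hupos x)) (hmonu x)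
    exact (mul_pos (hvpos x) hpos).le
  · rw [hdvg, mul_div_cancel_left₀ _ (hvpos x).ne']
end
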